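/- Assume R is simply-laced. Let μ ∈ X be dominant and let β∨ be a positive coroot of the relative coroot system R' such that ρ(μ) − β∨ is dominant (its image in the σ-invariants of X⊗ℝ pairs nonnegatively with every simple root). Then there exists a positive coroot γ∨ of R such that ρ(γ∨) = β∨ and ⟨γ, μ⟩ ≥ 1. -/

import Mathlib

/-!
Common setup: an abstract reduced irreducible crystallographic root system `R`
inside a real inner product space `E`, with simple roots `α i` (`i : ι`) forming
a basis of `E`, Weyl group generated by the reflections in the roots
(equivalently, by the simple reflections), coroot pairing
`⟨x, a∨⟩ = 2 (x, a) / (a, a)`, weight lattice `P(R)`, root lattices `Q(R)`,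
`Q(R_J)`, etc.
-/

open scoped BigOperators

noncomputable section

/-- the pairing `⟨x, a∨⟩ = 2 (x, a)/(a, a)` of `x` with the coroot of `a`. -/
def pairR {E : Type} [NormedAddCommGroup E] [InnerProductSpace ℝ E] (x a : E) : ℝ :=
  2 * (inner ℝ x a : ℝ) / (inner ℝ a a : ℝ)

/-- the reflection in (the hyperplane orthogonal to) `a`. -/
def reflFun {E : Type} [NormedAddCommGroup E] [InnerProductSpace ℝ E] (a : E) (x : E) : E :=
  x - pairR x a • a

/-- A reduced irreducible crystallographic root system in a real inner product
space `E`, whose set of simple roots `simple : ι → E` is a basis of `E`. -/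
structure RootSystemCtx (ι E : Type) [Fintype ι] [DecidableEq ι]
    [NormedAddCommGroup E] [InnerProductSpace ℝ E] : Type where
  Roots : Set E
  simple : ι → E
  simple_mem : ∀ i, simple i ∈ Roots
  finite : Roots.Finite
  ne_zero : ∀ a ∈ Roots, a ≠ 0
  reduced : ∀ a ∈ Roots, ∀ t : ℝ, t • a ∈ Roots → t = 1 ∨ t = -1
  crystal : ∀ a ∈ Roots, ∀ b ∈ Roots, ∃ n : ℤ, pairR a b = (n : ℝ)
  refl_stable : ∀ a ∈ Roots, ∀ b ∈ Roots, reflFun b a ∈ Roots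
  indep : LinearIndependent ℝ simple
  span_top : Submodule.span ℝ (Set.range simple) = ⊤
  pos_neg : ∀ a ∈ Roots, (∃ c : ι → ℕ, a = ∑ i, (c i : ℝ) • simple i) ∨
      (∃ c : ι → ℕ, a = -∑ i, (c i : ℝ) • simple i)
  irred : ∀ R1 R2 : Set E, Roots = R1 ∪ R2 →
      (∀ a ∈ R1, ∀ b ∈ R2, (inner ℝ a b : ℝ) = 0) → R1 = ∅ ∨ R2 = ∅

namespace RootSystemCtx

variable {ι E : Type} [Fintype ι] [DecidableEq ι]
  [NormedAddCommGroup E] [InnerProductSpace ℝ E]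
variable (S : RootSystemCtx ι E)

/-- `R` is simply laced: `⟨a, b∨⟩ ∈ {-1, 0, 1}` for roots `b ≠ ± a`. -/
def SimplyLaced : Prop :=
  ∀ a ∈ S.Roots, ∀ b ∈ S.Roots, b ≠ a → b ≠ -a →
    pairR a b = -1 ∨ pairR a b = 0 ∨ pairR a b = 1

/-- membership in the weight lattice `P(R)`. -/
def IsWeight (x : E) : Prop := ∀ a ∈ S.Roots, ∃ n : ℤ, pairR x a = (n : ℝ)

/-- `x` is dominant: `⟨x, αᵢ∨⟩ ≥ 0` for all simple roots. -/
def IsDominant (x : E) : Prop := ∀ i, 0 ≤ pairR x (S.simple i)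

/-- positive roots: roots that are nonnegative combinations of simple roots. -/
def IsPositiveRoot (a : E) : Prop :=
  a ∈ S.Roots ∧ ∃ c : ι → ℕ, a = ∑ i, (c i : ℝ) • S.simple i

/-- the root lattice `Q(R)`. -/
def rootLattice : AddSubgroup E := AddSubgroup.closure S.Roots

/-- the root lattice `Q(R_J)` of the sub-root system `R_J`. -/
def rootLatticeJ (J : Finset ι) : AddSubgroup E :=
  AddSubgroup.closure (S.simple '' ↑J)

/-- the sub-root system `R_J` determined by the simple roots `α_j`, `j ∈ J`. -/
def RootsJ (J : Finset ι) : Set E :=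
  {a | a ∈ S.Roots ∧ a ∈ Submodule.span ℝ (S.simple '' ↑J)}

/-- `x` is `J`-dominant. -/
def IsJDominant (J : Finset ι) (x : E) : Prop := ∀ j ∈ J, 0 ≤ pairR x (S.simple j)

/-- `x` is `J`-minuscule: `⟨x, a∨⟩ ∈ {-1,0,1}` for all `a ∈ R_J`. -/
def IsJMinuscule (J : Finset ι) (x : E) : Prop :=
  ∀ a ∈ S.RootsJ J, pairR x a = -1 ∨ pairR x a = 0 ∨ pairR x a = 1

/-- the action of a word `[i₁, …, i_t]` of simple reflections:
`s_{i₁} ∘ ⋯ ∘ s_{i_t}`. -/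
def wordAct (l : List ι) : E → E :=
  l.foldr (fun i f => reflFun (S.simple i) ∘ f) id

/-- membership in the Weyl group `W` (generated by the simple reflections). -/
def InWeyl (w : E → E) : Prop := ∃ l : List ι, S.wordAct l = w

/-- the Weyl group orbit `W x`. -/
def weylOrbit (x : E) : Set E := {y | ∃ l : List ι, y = S.wordAct l x}

/-- a word is reduced if no shorter word gives the same Weyl group element. -/
def IsReducedWord (l : List ι) : Prop :=
  ∀ l' : List ι, S.wordAct l' = S.wordAct l → l.length ≤ l'.length

/-- `w ∈ W` is `λ`-minuscule: some (equivalently, any) reduced expression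
`w = s_{i₁} ⋯ s_{i_t}` satisfies
`⟨s_{i_{r+1}} ⋯ s_{i_t} λ, α_{i_r}∨⟩ = -1` for all `1 ≤ r ≤ t`. -/
def IsMinusculeFor (lam : E) (w : E → E) : Prop :=
  ∃ l : List ι, S.wordAct l = w ∧ S.IsReducedWord l ∧
    ∀ r : Fin l.length,
      pairR (S.wordAct (l.drop (r + 1)) lam) (S.simple (l.get r)) = -1

/-- the basis of simple roots. -/
def simpleBasis : Module.Basis ι ℝ E := Module.Basis.mk S.indep S.span_top.ge

/-- `⟨x, ωᵢ⟩`: the pairing with the fundamental coweight `ωᵢ` dual to `αᵢ`,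
i.e. the `i`-th coordinate of `x` in the basis of simple roots. -/
def coweightPair (x : E) (i : ι) : ℝ := S.simpleBasis.repr x i

end RootSystemCtx

/-!
Quasi-split setup: `X` is the cocharacter lattice of a root datum with reduced
root system `R = S.Roots`; since `E` is self-dual via the inner product, roots
and coroots both live in `E` and the pairing `⟨α, x⟩` of a root `α` with a
cocharacter `x` is the inner product. `σ` is a finite-order linear isometry of
`E` preserving `X` and permuting the simple roots (via a permutation `π` of
the index set). `Y = X/(1-σ)X` with projection `ρ`, and `Y ⊗ ℝ` is identified
with the `σ`-invariants of `X ⊗ ℝ` via averaging over `⟨σ⟩`; accordingly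
`ρ(x) = ρ(x')` iff `x - x' ∈ (1-σ)X = {u - σu : u ∈ X}`, and the image of
`ρ(x)` in the invariants is `avg x = n⁻¹ ∑_{k<n} σᵏ x`. The relative Weyl
group `W'` is the subgroup of `σ`-fixed elements of `W` (those commuting with
`σ`). -/

/-- the coroot `a∨ = 2a/(a,a)` of `a`. -/
def corootOf {E : Type} [NormedAddCommGroup E] [InnerProductSpace ℝ E] (a : E) : E :=
  (2 / (inner ℝ a a : ℝ)) • a

/-- the averaging map over `⟨σ⟩` (for `σ` of order dividing `n`), realizing
the identification of `Y ⊗ ℝ` (resp. `Y_M ⊗ ℝ`) with `σ`-invariants. -/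
def avgOf {E : Type} [NormedAddCommGroup E] [InnerProductSpace ℝ E]
    (σ : E ≃ₗᵢ[ℝ] E) (n : ℕ) (x : E) : E :=
  (n : ℝ)⁻¹ • ∑ k ∈ Finset.range n, (σ ^ k) x

/-- `𝔞_P`: the subspace of `σ`-invariant vectors annihilated by every simple
root `α_j`, `j ∈ J`. -/
def aPsub {ι E : Type} [Fintype ι] [DecidableEq ι]
    [NormedAddCommGroup E] [InnerProductSpace ℝ E]
    (S : RootSystemCtx ι E) (σ : E ≃ₗᵢ[ℝ] E) (J : Finset ι) : Submodule ℝ E where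
  carrier := {v : E | σ v = v ∧ ∀ j ∈ J, (inner ℝ (S.simple j) v : ℝ) = 0}
  add_mem' := by
    rintro a b ⟨ha1, ha2⟩ ⟨hb1, hb2⟩
    refine ⟨by rw [map_add, ha1, hb1], fun j hj => ?_⟩
    rw [inner_add_right, ha2 j hj, hb2 j hj, add_zero]
  zero_mem' := by
    refine ⟨map_zero σ, fun j hj => ?_⟩
    simp
  smul_mem' := by
    rintro c a ⟨ha1, ha2⟩
    refine ⟨by rw [map_smul, ha1], fun j hj => ?_⟩
    rw [inner_smul_right, ha2 j hj, mul_zero]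

/-!
Proof idea: `σ` permutes the positive roots, and `σᵏx - x ∈ (1 - σ)X` for `x ∈ X`, so every
`σᵏγ₀` is a positive root lifting `β∨`. If all `⟨σᵏγ₀, μ⟩` vanished, the average `A` of `γ₀∨`
over `⟨σ⟩` would be orthogonal to `μ`, and by dominance of `ν = avg(μ - γ₀∨)`
`0 ≤ ⟨γ₀∨, ν⟩ = ⟨A, μ⟩ - ‖A‖² = -‖A‖²`, so `A = 0`; but `A` has positive height.
Hence some `⟨σᵏγ₀, μ⟩` is a nonzero, nonnegative integer.
-/

section Reflections

variable {E : Type} [NormedAddCommGroup E] [InnerProductSpace ℝ E]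

theorem LinearIsometryEquiv.map_reflFun (g : E ≃ₗᵢ[ℝ] E) (a x : E) :
    g (reflFun a x) = reflFun (g a) (g x) := by
  simp only [reflFun, pairR, map_sub, map_smul, LinearIsometryEquiv.inner_map_map]

theorem LinearIsometryEquiv.map_corootOf (g : E ≃ₗᵢ[ℝ] E) (a : E) :
    g (corootOf a) = corootOf (g a) := by
  simp only [corootOf, map_smul, LinearIsometryEquiv.inner_map_map]

theorem reflFun_reflFun {a : E} (ha : a ≠ 0) (x : E) : reflFun a (reflFun a x) = x := by
  have haa : (inner ℝ a a : ℝ) ≠ 0 := inner_self_ne_zero.mpr ha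
  have hpair : pairR (reflFun a x) a = -pairR x a := by
    simp only [reflFun, pairR, inner_sub_left, real_inner_smul_left]
    field_simp
    ring
  rw [reflFun, hpair, neg_smul, sub_neg_eq_add, reflFun, sub_add_cancel]

theorem inner_corootOf_left (a x : E) :
    (inner ℝ (corootOf a) x : ℝ) = 2 / (inner ℝ a a : ℝ) * inner ℝ a x :=
  real_inner_smul_left _ _ _

end Reflections

section Averaging

variable {E : Type} [NormedAddCommGroup E] [InnerProductSpace ℝ E]
  (σ : E ≃ₗᵢ[ℝ] E) {n : ℕ}

theorem LinearIsometryEquiv.pow_succ_apply' (k : ℕ) (x : E) : (σ ^ (k + 1)) x = σ ((σ ^ k) x) := by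
  rw [pow_succ', LinearIsometryEquiv.coe_mul, Function.comp_apply]

theorem LinearIsometryEquiv.pow_apply_of_map_eq {y : E} (hy : σ y = y) (k : ℕ) :
    (σ ^ k) y = y := by
  induction k with
  | zero => rfl
  | succ k ih => rw [σ.pow_succ_apply', ih, hy]

theorem map_avgOf (hσn : σ ^ n = 1) (x : E) : σ (avgOf σ n x) = avgOf σ n x := by
  have hcycle := (Finset.sum_range_succ' (fun k => (σ ^ k) x) n).symm.trans
    (Finset.sum_range_succ (fun k => (σ ^ k) x) n)
  rw [hσn, pow_zero] at hcycle
  simp only [avgOf, map_smul, map_sum, ← σ.pow_succ_apply', add_right_cancel hcycle]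

theorem avgOf_sub (x y : E) : avgOf σ n (x - y) = avgOf σ n x - avgOf σ n y := by
  simp only [avgOf, map_sub, Finset.sum_sub_distrib, smul_sub]

theorem inner_avgOf_eq_zero {x y : E} (h : ∀ k, (inner ℝ ((σ ^ k) x) y : ℝ) = 0) :
    (inner ℝ (avgOf σ n x) y : ℝ) = 0 := by
  simp [avgOf, real_inner_smul_left, sum_inner, h]

theorem inner_avgOf_of_map_eq (hn : 0 < n) {y : E} (hy : σ y = y) (x : E) :
    (inner ℝ (avgOf σ n x) y : ℝ) = inner ℝ x y := by
  have hpow (k : ℕ) : (inner ℝ ((σ ^ k) x) y : ℝ) = inner ℝ x y := by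
    rw [← (σ ^ k).inner_map_map x y, σ.pow_apply_of_map_eq hy]
  simp only [avgOf, real_inner_smul_left, sum_inner, hpow, Finset.sum_const, Finset.card_range,
    nsmul_eq_mul]
  field_simp

theorem inner_avgOf_sub_self (hn : 0 < n) (hσn : σ ^ n = 1) (x y : E) :
    (inner ℝ x (avgOf σ n (y - x)) : ℝ) = inner ℝ (avgOf σ n x) y - ‖avgOf σ n x‖ ^ 2 := by
  have hxy : (inner ℝ (avgOf σ n x) (avgOf σ n y) : ℝ) = inner ℝ (avgOf σ n x) y := by
    rw [real_inner_comm, inner_avgOf_of_map_eq σ hn (map_avgOf σ hσn x), real_inner_comm]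
  rw [← inner_avgOf_of_map_eq σ hn (map_avgOf σ hσn (y - x)), avgOf_sub, inner_sub_right, hxy,
    real_inner_self_eq_norm_sq]

theorem exists_pow_apply_sub_eq_sub_map {X : AddSubgroup E} (hσX : ∀ x ∈ X, σ x ∈ X) {x : E}
    (hx : x ∈ X) (k : ℕ) : ∃ u ∈ X, (σ ^ k) x - x = u - σ u := by
  have hpow : ∀ k, (σ ^ k) x ∈ X := Nat.rec hx fun k hk => σ.pow_succ_apply' k x ▸ hσX _ hk
  induction k with
  | zero => exact ⟨0, X.zero_mem, by simp⟩
  | succ k ih =>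
    obtain ⟨u, hu, hku⟩ := ih
    refine ⟨u - (σ ^ k) x, X.sub_mem hu (hpow k), ?_⟩
    rw [map_sub, ← σ.pow_succ_apply', sub_sub_sub_comm, ← hku]
    abel

end Averaging

namespace RootSystemCtx

variable {ι E : Type} [Fintype ι] [DecidableEq ι] [NormedAddCommGroup E] [InnerProductSpace ℝ E]
  (S : RootSystemCtx ι E)

theorem simpleBasis_apply (i : ι) : S.simpleBasis i = S.simple i :=
  Module.Basis.mk_apply _ _ _

theorem simpleBasis_repr_simple (i : ι) : S.simpleBasis.repr (S.simple i) = Finsupp.single i 1 := by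
  rw [← simpleBasis_apply, Module.Basis.repr_self]

def height : E →ₗ[ℝ] ℝ := S.simpleBasis.sumCoords

theorem height_simple (i : ι) : S.height (S.simple i) = 1 := by
  rw [height, ← simpleBasis_apply, Module.Basis.sumCoords_self_apply]

theorem height_sum_smul_simple (c : ι → ℝ) : S.height (∑ i, c i • S.simple i) = ∑ i, c i := by
  simp only [map_sum, map_smul, height_simple, smul_eq_mul, mul_one]

variable {S}

theorem IsPositiveRoot.inner_nonneg {a x : E} (ha : S.IsPositiveRoot a)
    (hx : ∀ i, 0 ≤ (inner ℝ (S.simple i) x : ℝ)) : 0 ≤ (inner ℝ a x : ℝ) := by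
  obtain ⟨-, c, rfl⟩ := ha
  rw [sum_inner]
  exact Finset.sum_nonneg fun i _ => by
    rw [real_inner_smul_left]
    exact mul_nonneg (Nat.cast_nonneg _) (hx i)

theorem IsPositiveRoot.height_pos {a : E} (ha : S.IsPositiveRoot a) : 0 < S.height a := by
  obtain ⟨ha, c, rfl⟩ := ha
  rw [height_sum_smul_simple]
  refine (Finset.sum_nonneg fun i _ => Nat.cast_nonneg (c i)).lt_of_ne fun h => S.ne_zero _ ha ?_
  have hc := (Finset.sum_eq_zero_iff_of_nonneg fun i _ => Nat.cast_nonneg (c i)).mp h.symm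
  exact Finset.sum_eq_zero fun i hi => by rw [hc i hi, zero_smul]

theorem exists_ne_coeff_pos_of_ne_simple {a : E} {c : ι → ℕ} (ha : a ∈ S.Roots)
    (hc : a = ∑ k, (c k : ℝ) • S.simple k) {i : ι} (hai : a ≠ S.simple i) :
    ∃ j ≠ i, 0 < c j := by
  by_contra! h
  have hai' : a = (c i : ℝ) • S.simple i := by
    rw [hc, Finset.sum_eq_single i (fun j _ hj => by rw [Nat.le_zero.mp (h j hj)]; simp) (by simp)]
  rcases S.reduced _ (S.simple_mem i) _ (hai' ▸ ha) with h1 | h1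
  · exact hai (by rw [hai', h1, one_smul])
  · linarith [(Nat.cast_nonneg (c i) : (0 : ℝ) ≤ c i)]

theorem exists_reflFun_simple_height_lt {a : E} {c : ι → ℕ} (ha : a ∈ S.Roots)
    (hc : a = ∑ k, (c k : ℝ) • S.simple k) (hsimple : ∀ i, a ≠ S.simple i) :
    ∃ i, ∃ d : ι → ℕ, reflFun (S.simple i) a = ∑ k, (d k : ℝ) • S.simple k ∧
      ∑ k, d k < ∑ k, c k := by
  obtain ⟨i, hi⟩ : ∃ i, 0 < (inner ℝ a (S.simple i) : ℝ) := by
    by_contra! h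
    have haa : (inner ℝ a a : ℝ) ≤ 0 := by
      nth_rewrite 2 [hc]
      rw [inner_sum]
      exact Finset.sum_nonpos fun k _ => by
        rw [real_inner_smul_right]
        exact mul_nonpos_of_nonneg_of_nonpos (Nat.cast_nonneg _) (h k)
    exact S.ne_zero a ha (real_inner_self_nonpos.mp haa)
  obtain ⟨m, hm⟩ := S.crystal a ha _ (S.simple_mem i)
  have hm1 : (1 : ℝ) ≤ m := by
    have hpos : (0 : ℝ) < m := hm ▸ div_pos (by linarith) (real_inner_self_pos.mpr
      (S.ne_zero _ (S.simple_mem i)))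
    exact_mod_cast (show (0 : ℤ) < m by exact_mod_cast hpos)
  have hb : reflFun (S.simple i) a = a - (m : ℝ) • S.simple i := by rw [reflFun, hm]
  obtain ⟨j, hji, hcj⟩ := exists_ne_coeff_pos_of_ne_simple ha hc (hsimple i)
  rcases S.pos_neg _ (S.refl_stable a ha _ (S.simple_mem i)) with ⟨d, hd⟩ | ⟨d, hd⟩
  · refine ⟨i, d, hd, ?_⟩
    have hheight := congrArg S.height (hb.symm.trans hd)
    rw [map_sub, map_smul, height_simple, hc, height_sum_smul_simple, height_sum_smul_simple,
      smul_eq_mul, mul_one] at hheight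
    have : ((∑ k, d k : ℕ) : ℝ) < ((∑ k, c k : ℕ) : ℝ) := by push_cast; linarith
    exact_mod_cast this
  · have hcoeff := congrArg (fun x => S.simpleBasis.repr x j) (hb.symm.trans hd)
    obtain ⟨hcj0, -⟩ : c j = 0 ∧ d j = 0 := by
      simpa [hc, simpleBasis_repr_simple, Finsupp.single_apply, hji] using hcoeff
    omega

/-- Induction on the height: a non-simple positive root is `s_i b` for a positive root
`b` of smaller height, and `g` intertwines `s_i` with `s_{π i}`. -/
theorem map_mem_roots_of_isPositiveRoot (g : E ≃ₗᵢ[ℝ] E) (π : ι → ι)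
    (hg : ∀ i, g (S.simple i) = S.simple (π i)) {a : E} (ha : S.IsPositiveRoot a) :
    g a ∈ S.Roots := by
  obtain ⟨ha, c, hc⟩ := ha
  obtain ⟨N, hN⟩ : ∃ N, ∑ k, c k = N := ⟨_, rfl⟩
  induction N using Nat.strong_induction_on generalizing a c with
  | _ N ih =>
  by_cases hsimple : ∃ i, a = S.simple i
  · obtain ⟨i, rfl⟩ := hsimple
    exact hg i ▸ S.simple_mem (π i)
  push Not at hsimple
  obtain ⟨i, d, hd, hlt⟩ := exists_reflFun_simple_height_lt ha hc hsimple
  have hb := ih _ (hN ▸ hlt) (S.refl_stable a ha _ (S.simple_mem i)) d hd rfl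
  rw [← reflFun_reflFun (S.ne_zero _ (S.simple_mem i)) a, g.map_reflFun, hg]
  exact S.refl_stable _ hb _ (S.simple_mem (π i))

theorem IsPositiveRoot.map (g : E ≃ₗᵢ[ℝ] E) (π : Equiv.Perm ι)
    (hg : ∀ i, g (S.simple i) = S.simple (π i)) {a : E} (ha : S.IsPositiveRoot a) :
    S.IsPositiveRoot (g a) := by
  refine ⟨map_mem_roots_of_isPositiveRoot g π hg ha, ?_⟩
  obtain ⟨-, c, rfl⟩ := ha
  refine ⟨fun j => c (π.symm j), ?_⟩
  rw [map_sum, ← Equiv.sum_comp π fun j => (c (π.symm j) : ℝ) • S.simple j]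
  simp [hg]

theorem IsPositiveRoot.pow_apply (σ : E ≃ₗᵢ[ℝ] E) (π : Equiv.Perm ι)
    (hσ : ∀ i, σ (S.simple i) = S.simple (π i)) {a : E} (ha : S.IsPositiveRoot a) (k : ℕ) :
    S.IsPositiveRoot ((σ ^ k) a) := by
  induction k with
  | zero => exact ha
  | succ k ih => rw [σ.pow_succ_apply']; exact ih.map σ π hσ

theorem IsPositiveRoot.height_corootOf_pos {a : E} (ha : S.IsPositiveRoot a) :
    0 < S.height (corootOf a) := by
  rw [corootOf, map_smul, smul_eq_mul]
  exact mul_pos (div_pos two_pos (real_inner_self_pos.mpr (S.ne_zero a ha.1))) ha.height_pos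

theorem height_avgOf_pos (σ : E ≃ₗᵢ[ℝ] E) {n : ℕ} (hn : 0 < n) {x : E}
    (hx : ∀ k, 0 < S.height ((σ ^ k) x)) : 0 < S.height (avgOf σ n x) := by
  rw [avgOf, map_smul, map_sum, smul_eq_mul]
  exact mul_pos (inv_pos.mpr (Nat.cast_pos.mpr hn))
    (Finset.sum_pos (fun k _ => hx k) (Finset.nonempty_range_iff.mpr hn.ne'))

theorem exists_inner_pow_apply_ne_zero (σ : E ≃ₗᵢ[ℝ] E) {n : ℕ} (hn : 0 < n) (hσn : σ ^ n = 1)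
    (π : Equiv.Perm ι) (hσ : ∀ i, σ (S.simple i) = S.simple (π i)) {γ μ : E}
    (hγ : S.IsPositiveRoot γ)
    (hdom : ∀ i, 0 ≤ (inner ℝ (S.simple i) (avgOf σ n (μ - corootOf γ)) : ℝ)) :
    ∃ k, (inner ℝ ((σ ^ k) γ) μ : ℝ) ≠ 0 := by
  by_contra! h
  set A := avgOf σ n (corootOf γ)
  have hAμ : (inner ℝ A μ : ℝ) = 0 := inner_avgOf_eq_zero σ fun k => by
    rw [(σ ^ k).map_corootOf, inner_corootOf_left, h k, mul_zero]
  have hγν : 0 ≤ (inner ℝ (corootOf γ) (avgOf σ n (μ - corootOf γ)) : ℝ) := by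
    rw [inner_corootOf_left]
    exact mul_nonneg (div_nonneg zero_le_two real_inner_self_nonneg) (hγ.inner_nonneg hdom)
  rw [inner_avgOf_sub_self σ hn hσn, hAμ] at hγν
  have hA : A = 0 := norm_eq_zero.mp (pow_eq_zero_iff two_ne_zero |>.mp
    (le_antisymm (by linarith) (sq_nonneg _)))
  have hAheight : 0 < S.height A := height_avgOf_pos σ hn fun k => by
    rw [(σ ^ k).map_corootOf]
    exact (hγ.pow_apply σ π hσ k).height_corootOf_pos
  rw [hA, map_zero] at hAheight
  exact lt_irrefl 0 hAheight

end RootSystemCtx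

theorem exists_coroot_lifting_pairing_pos_general
    {ι E : Type} [Fintype ι] [DecidableEq ι]
    [NormedAddCommGroup E] [InnerProductSpace ℝ E]
    (S : RootSystemCtx ι E)
    (X : AddSubgroup E)
    (hXcor : ∀ a ∈ S.Roots, corootOf a ∈ X)
    (hXint : ∀ a ∈ S.Roots, ∀ x ∈ X, ∃ m : ℤ, (inner ℝ a x : ℝ) = m)
    (σ : E ≃ₗᵢ[ℝ] E) (n : ℕ) (hn : 0 < n) (hσn : σ ^ n = 1)
    (hσX : ∀ x ∈ X, σ x ∈ X)
    (π : Equiv.Perm ι) (hσsimple : ∀ i, σ (S.simple i) = S.simple (π i))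
    (μ : E) (hμX : μ ∈ X) (hμdom : ∀ i : ι, 0 ≤ (inner ℝ (S.simple i) μ : ℝ))
    (γ₀ : E) (hγ₀ : S.IsPositiveRoot γ₀)
    (hν'dom : ∀ i : ι, 0 ≤ (inner ℝ (S.simple i) (avgOf σ n (μ - corootOf γ₀)) : ℝ)) :
    ∃ γ : E, S.IsPositiveRoot γ ∧
      (∃ u ∈ X, corootOf γ - corootOf γ₀ = u - σ u) ∧
      1 ≤ (inner ℝ γ μ : ℝ) := by
  obtain ⟨k, hk⟩ := RootSystemCtx.exists_inner_pow_apply_ne_zero σ hn hσn π hσsimple hγ₀ hν'dom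
  have hγ := hγ₀.pow_apply σ π hσsimple k
  refine ⟨(σ ^ k) γ₀, hγ, ?_, ?_⟩
  · rw [← (σ ^ k).map_corootOf]
    exact exists_pow_apply_sub_eq_sub_map σ hσX (hXcor γ₀ hγ₀.1) k
  · obtain ⟨m, hm⟩ := hXint _ hγ.1 μ hμX
    have hnonneg := hγ.inner_nonneg hμdom
    rw [hm] at hk hnonneg ⊢
    have hm0 : m ≠ 0 := by exact_mod_cast hk
    have hm1 : 1 ≤ m := by
      have : 0 ≤ m := by exact_mod_cast hnonneg
      omega
    exact_mod_cast hm1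

/-- (quasi-split, `R` simply-laced) Let `μ ∈ X` be dominant
and let `β∨ = ρ(γ₀∨)` be a positive coroot of the relative coroot system `R'`
(`γ₀` a positive coroot of `R`) such that `ρ(μ) - β∨` is dominant, i.e. its
image `avg(μ - γ₀∨)` in the `σ`-invariants of `X ⊗ ℝ` pairs nonnegatively with
every simple root. Then there exists a positive coroot `γ∨` of `R` with
`ρ(γ∨) = β∨` (i.e. `γ∨ - γ₀∨ ∈ (1-σ)X`) and `⟨γ, μ⟩ ≥ 1`. -/
theorem exists_coroot_lifting_pairing_pos
    {ι E : Type} [Fintype ι] [DecidableEq ι]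
    [NormedAddCommGroup E] [InnerProductSpace ℝ E]
    (S : RootSystemCtx ι E) (hSL : S.SimplyLaced)
    (X : AddSubgroup E)
    (hXcor : ∀ a ∈ S.Roots, corootOf a ∈ X)
    (hXint : ∀ a ∈ S.Roots, ∀ x ∈ X, ∃ m : ℤ, (inner ℝ a x : ℝ) = m)
    (σ : E ≃ₗᵢ[ℝ] E) (n : ℕ) (hn : 0 < n) (hσn : σ ^ n = 1)
    (hσX : ∀ x ∈ X, σ x ∈ X)
    (π : Equiv.Perm ι) (hσsimple : ∀ i, σ (S.simple i) = S.simple (π i))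
    (μ : E) (hμX : μ ∈ X) (hμdom : ∀ i : ι, 0 ≤ (inner ℝ (S.simple i) μ : ℝ))
    (γ₀ : E) (hγ₀ : S.IsPositiveRoot γ₀)
    (hν'dom : ∀ i : ι, 0 ≤ (inner ℝ (S.simple i) (avgOf σ n (μ - corootOf γ₀)) : ℝ)) :
    ∃ γ : E, S.IsPositiveRoot γ ∧
      (∃ u ∈ X, corootOf γ - corootOf γ₀ = u - σ u) ∧
      1 ≤ (inner ℝ γ μ : ℝ) :=
  exists_coroot_lifting_pairing_pos_general S X hXcor hXint σ n hn hσn hσX π hσsimple μ hμX hμdom γ₀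
    hγ₀ hν'dom
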